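/- arXiv:1912.08145 — 2 statements merged into one kernel-verified Lean document; each statement's English description precedes it below -/
import Mathlib

section
/- Let H be a cocommutative Hopf algebra over a commutative ring k and M a left H-module. Then the evaluation-at-unit map γ: Hom_k(H, M) → M, f ↦ f(1), makes M a right H-contramodule which together with the given H-action is a stable anti-Yetter–Drinfel'd contramodule: for all u ∈ H and f ∈ Hom_k(H, M), u·γ(f) = γ(x ↦ u₍₂₎·f(S(u₍₃₎) x u₍₁₎)), and γ(x ↦ x·m) = m for all m ∈ M. -/
open TensorProduct

set_option maxHeartbeats 1000000
set_option synthInstance.maxHeartbeats 400000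
set_option maxRecDepth 8000

noncomputable section

variable (k H M : Type*) [CommRing k] [Ring H] [HopfAlgebra k H]
  [AddCommGroup M] [Module k M] [Module H M] [IsScalarTower k H M] [SMulCommClass k H M]

/-- The `H`-action on `M` as a `k`-linear map `H →ₗ (M →ₗ M)`. -/
def act : H →ₗ[k] M →ₗ[k] M := (Algebra.lsmul k k M).toLinearMap

/-- Evaluation at the unit `1_H`, giving the (trivial) contraaction on `M`. -/
def evalOne : (H →ₗ[k] M) →ₗ[k] M := LinearMap.applyₗ (1 : H)

/-- Iterated comultiplication `u ↦ u₍₁₎ ⊗ (u₍₂₎ ⊗ u₍₃₎)`. -/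
def comul₂ : H →ₗ[k] H ⊗[k] (H ⊗[k] H) :=
  (LinearMap.lTensor H (Coalgebra.comul (R := k))) ∘ₗ (Coalgebra.comul (R := k))

/-- `u₍₁₎ ⊗ (u₍₂₎ ⊗ u₍₃₎) ↦ u₍₂₎ ⊗ (S(u₍₃₎) ⊗ u₍₁₎)`. -/
def rearrange : H ⊗[k] (H ⊗[k] H) →ₗ[k] H ⊗[k] (H ⊗[k] H) :=
  (TensorProduct.assoc k H H H).toLinearMap ∘ₗ
    (TensorProduct.comm k H (H ⊗[k] H)).toLinearMap ∘ₗ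
      (LinearMap.lTensor H (LinearMap.lTensor H (HopfAlgebra.antipode (R := k))))

/-- `(b ⊗ c) ⊗ x ↦ b * x * c`. -/
def sandwich : (H ⊗[k] H) ⊗[k] H →ₗ[k] H :=
  (LinearMap.mul' k H) ∘ₗ (LinearMap.rTensor H (LinearMap.mul' k H)) ∘ₗ
    (TensorProduct.assoc k H H H).symm.toLinearMap ∘ₗ
      (LinearMap.lTensor H (TensorProduct.comm k H H).toLinearMap) ∘ₗ
        (TensorProduct.assoc k H H H).toLinearMap

/-- `u ⊗ x ↦ u₍₂₎ • f (S(u₍₃₎) * x * u₍₁₎)`. -/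
def aydRHS (f : H →ₗ[k] M) : H ⊗[k] H →ₗ[k] M :=
  (TensorProduct.lift (act k H M)) ∘ₗ
    (LinearMap.lTensor H (f ∘ₗ sandwich k H)) ∘ₗ
      (TensorProduct.assoc k H (H ⊗[k] H) H).toLinearMap ∘ₗ
        (LinearMap.rTensor H ((rearrange k H) ∘ₗ (comul₂ k H)))

/-- The cyclic shift `σ` commutes the antipode from the third leg to the second. -/
lemma aux_sigma_antipode :
    (TensorProduct.assoc k H H H).toLinearMap ∘ₗ
      (TensorProduct.comm k H (H ⊗[k] H)).toLinearMap ∘ₗ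
        (LinearMap.lTensor H (LinearMap.lTensor H (HopfAlgebra.antipode (R := k)))) =
    (LinearMap.lTensor H (LinearMap.rTensor H (HopfAlgebra.antipode (R := k)))) ∘ₗ
      (TensorProduct.assoc k H H H).toLinearMap ∘ₗ
        (TensorProduct.comm k H (H ⊗[k] H)).toLinearMap := by
  ext a b c
  simp

/-- Naturality of `comm` with respect to `comul` on the second leg. -/
lemma aux_comm_lTensor :
    (TensorProduct.comm k H (H ⊗[k] H)).toLinearMap ∘ₗ
      LinearMap.lTensor H (Coalgebra.comul (R := k)) =
    LinearMap.rTensor H (Coalgebra.comul (R := k)) ∘ₗ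
      (TensorProduct.comm k H H).toLinearMap := by
  ext a b
  simp

/-- If `H` is cocommutative, `comul₂` is invariant under the cyclic shift. -/
lemma aux_cyc_comul₂
    (hcc : (TensorProduct.comm k H H).toLinearMap ∘ₗ (Coalgebra.comul (R := k) (A := H)) =
      Coalgebra.comul) (u : H) :
    (TensorProduct.assoc k H H H)
      ((TensorProduct.comm k H (H ⊗[k] H)) (comul₂ k H u)) = comul₂ k H u := by
  have h1 : (TensorProduct.comm k H (H ⊗[k] H))
      (LinearMap.lTensor H (Coalgebra.comul (R := k)) (Coalgebra.comul (R := k) u)) =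
      LinearMap.rTensor H (Coalgebra.comul (R := k))
        ((TensorProduct.comm k H H) (Coalgebra.comul (R := k) u)) :=
    LinearMap.congr_fun (aux_comm_lTensor k H) (Coalgebra.comul (R := k) u)
  have h2 : (TensorProduct.comm k H H) (Coalgebra.comul (R := k) u) =
      Coalgebra.comul (R := k) u := LinearMap.congr_fun hcc u
  simp only [comul₂, LinearMap.comp_apply, h1, h2]
  exact Coalgebra.coassoc_apply u

/-- The key identity: `rearrange ∘ comul₂ = (1 ⊗ (S ⊗ 1)) ∘ comul₂` for cocommutative `H`. -/
lemma aux_key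
    (hcc : (TensorProduct.comm k H H).toLinearMap ∘ₗ (Coalgebra.comul (R := k) (A := H)) =
      Coalgebra.comul) (u : H) :
    rearrange k H (comul₂ k H u) =
      LinearMap.lTensor H (LinearMap.rTensor H (HopfAlgebra.antipode (R := k)))
        (comul₂ k H u) := by
  have h := LinearMap.congr_fun (aux_sigma_antipode k H) (comul₂ k H u)
  simp only [LinearMap.comp_apply, LinearEquiv.coe_coe] at h
  simp only [rearrange, LinearMap.comp_apply, LinearEquiv.coe_coe, h,
    aux_cyc_comul₂ k H hcc u]

lemma aux_sandwich_one (w : H ⊗[k] H) :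
    sandwich k H (w ⊗ₜ[k] (1 : H)) = LinearMap.mul' k H w := by
  induction w using TensorProduct.induction_on with
  | zero => rw [TensorProduct.zero_tmul, map_zero, map_zero]
  | tmul a b => simp [sandwich]
  | add x y hx hy => rw [TensorProduct.add_tmul, map_add, hx, hy, map_add]

theorem evalOne_stable_aYD_contramodule
    -- cocommutativity of `H`
    (hcc : (TensorProduct.comm k H H).toLinearMap ∘ₗ (Coalgebra.comul (R := k) (A := H)) =
      Coalgebra.comul) :
    -- `γ` is a contraaction: contraassociativity ...
    (∀ G : H →ₗ[k] (H →ₗ[k] M),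
      evalOne k H M ((evalOne k H M) ∘ₗ G) =
        evalOne k H M ((TensorProduct.lift G) ∘ₗ (Coalgebra.comul (R := k)))) ∧
    -- ... and contraunitality
    (∀ m : M,
      evalOne k H M
        ((LinearMap.toSpanSingleton k M m) ∘ₗ (Coalgebra.counit (R := k) (A := H))) = m) ∧
    -- anti-Yetter–Drinfel'd compatibility: `u • γ(f) = γ(x ↦ u₍₂₎ • f(S(u₍₃₎) x u₍₁₎))`
    (∀ (u : H) (f : H →ₗ[k] M), u • (f 1) = aydRHS k H M f (u ⊗ₜ[k] (1 : H))) ∧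
    -- stability: `γ(x ↦ x • m) = m`
    (∀ m : M, evalOne k H M ((act k H M).flip m) = m) := by
  refine ⟨?_, ?_, ?_, ?_⟩
  · intro G
    simp [evalOne, Bialgebra.comul_one, Algebra.TensorProduct.one_def]
  · intro m
    simp [evalOne]
  · intro u f
    set r := Coalgebra.Repr.arbitrary k u with hr
    have hcom : Coalgebra.comul (R := k) u =
        ∑ i ∈ r.index, r.left i ⊗ₜ[k] r.right i := r.eq.symm
    have h2 : comul₂ k H u =
        ∑ i ∈ r.index, r.left i ⊗ₜ[k] (Coalgebra.comul (R := k) (r.right i)) := by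
      simp [comul₂, hcom, map_sum]
    have hu : ∑ i ∈ r.index, Coalgebra.counit (R := k) (r.right i) • r.left i = u := by
      have h : ∑ i ∈ r.index,
          (TensorProduct.rid k H) (r.left i ⊗ₜ[k] Coalgebra.counit (R := k) (r.right i)) =
          (TensorProduct.rid k H) (u ⊗ₜ[k] (1 : k)) := by
        rw [← map_sum, Coalgebra.sum_tmul_counit_eq]
      simpa using h
    have expand : aydRHS k H M f (u ⊗ₜ[k] (1 : H)) =
        TensorProduct.lift (act k H M)
          ((LinearMap.lTensor H (f ∘ₗ sandwich k H))
            ((TensorProduct.assoc k H (H ⊗[k] H) H)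
              ((rearrange k H (comul₂ k H u)) ⊗ₜ[k] (1 : H)))) := by
      rw [aydRHS]
      simp only [LinearMap.comp_apply, LinearEquiv.coe_coe, LinearMap.rTensor_tmul]
    rw [expand, aux_key k H hcc u, h2, map_sum]
    simp only [LinearMap.lTensor_tmul]
    rw [TensorProduct.sum_tmul, map_sum, map_sum, map_sum]
    have hterm : ∀ i ∈ r.index,
        TensorProduct.lift (act k H M)
          ((LinearMap.lTensor H (f ∘ₗ sandwich k H))
            ((TensorProduct.assoc k H (H ⊗[k] H) H)
              ((r.left i ⊗ₜ[k]
                (LinearMap.rTensor H (HopfAlgebra.antipode (R := k))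
                  (Coalgebra.comul (R := k) (r.right i)))) ⊗ₜ[k] (1 : H)))) =
        Coalgebra.counit (R := k) (r.right i) • (r.left i • f 1) := by
      intro i _
      rw [TensorProduct.assoc_tmul, LinearMap.lTensor_tmul, LinearMap.comp_apply,
        aux_sandwich_one, HopfAlgebra.mul_antipode_rTensor_comul_apply,
        Algebra.algebraMap_eq_smul_one, map_smul, TensorProduct.lift.tmul]
      simp only [act, AlgHom.toLinearMap_apply, Algebra.lsmul_coe]
      rw [smul_comm]
    rw [Finset.sum_congr rfl hterm]
    conv_lhs => rw [← hu]
    rw [Finset.sum_smul]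
    exact Finset.sum_congr rfl fun i _ => (smul_assoc _ _ _)
  · intro m
    simp [evalOne, act]

end
end

section
/- Let (M, t) be a cyclic unital opposite module over an operad with multiplication (O, μ, e). Define on M(n) the maps d_i(x) := μ •_i x for 0 ≤ i ≤ n−1, d_n(x) := μ •₀ t(x), and s_j(x) := e •_{j+1} x for 0 ≤ j ≤ n. Then (M_•, d_•, s_•, t) is a cyclic k-module. -/
/- STATEMENT 10: For a cyclic unital opposite module `(M, t)` over an operad with
multiplication `(O, μ, e)`, the maps `d_i(x) := μ •_i x` (0 ≤ i ≤ n−1),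
`d_n(x) := μ •₀ t(x)`, `s_j(x) := e •_{j+1} x` together with `t` form a cyclic `k`-module.
Operations `•_i : O(p) ⊗ M(n) → M(n−p+1)` are encoded as
`bullet p n m (h : p + m = n + 1) i : O p → M n → M m`. -/

noncomputable section

variable (k : Type*) [CommRing k]
variable (O : ℕ → Type*) [∀ n, AddCommGroup (O n)] [∀ n, Module k (O n)]
variable (M : ℕ → Type*) [∀ n, AddCommGroup (M n)] [∀ n, Module k (M n)]
variable (comp : ∀ p q n : ℕ, p + q = n + 1 → ℕ → O p → O q → O n)
variable (μ : O 2) (e : O 0) (one : O 1)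
variable (bullet : ∀ p n m : ℕ, p + m = n + 1 → ℕ → O p → M n → M m)
variable (t : ∀ n : ℕ, M n → M n)

/-- The faces of the associated cyclic module: `d_i = μ •_i` for `i ≤ n`,
`d_{n+1} = μ •₀ t` on `M(n+1)`. -/
def dmap (n : ℕ) (i : ℕ) (x : M (n + 1)) : M n :=
  if i = n + 1 then bullet 2 (n + 1) n (by omega) 0 μ (t (n + 1) x)
  else bullet 2 (n + 1) n (by omega) i μ x

/-- The degeneracies of the associated cyclic module: `s_j = e •_{j+1}`. -/
def smap (n : ℕ) (j : ℕ) (x : M n) : M (n + 1) :=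
  bullet 0 n (n + 1) (by omega) (j + 1) e x

theorem cyclic_opposite_module_gives_cyclic_module
    -- operad structure (context)
    (hassoc₁ : ∀ p q r a b n i j
      (h1 : p + q = a + 1) (h2 : a + r = n + 1) (h3 : p + r = b + 1) (h4 : b + q = n + 1)
      (φ : O p) (ψ : O q) (χ : O r), 1 ≤ j → j < i → i ≤ p →
      comp a r n h2 j (comp p q a h1 i φ ψ) χ =
        comp b q n h4 (i + r - 1) (comp p r b h3 j φ χ) ψ)
    (hassoc₂ : ∀ p q r a c n i j
      (h1 : p + q = a + 1) (h2 : a + r = n + 1) (h3 : q + r = c + 1) (h4 : p + c = n + 1)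
      (φ : O p) (ψ : O q) (χ : O r), 1 ≤ i → i ≤ j → j < q + i →
      comp a r n h2 j (comp p q a h1 i φ ψ) χ =
        comp p c n h4 i φ (comp q r c h3 (j - i + 1) ψ χ))
    (hassoc₃ : ∀ p q r a b n i j
      (h1 : p + q = a + 1) (h2 : a + r = n + 1) (h3 : p + r = b + 1) (h4 : b + q = n + 1)
      (φ : O p) (ψ : O q) (χ : O r), 1 ≤ i → i ≤ p → q + i ≤ j → j ≤ a →
      comp a r n h2 j (comp p q a h1 i φ ψ) χ =
        comp b q n h4 i (comp p r b h3 (j - q + 1) φ χ) ψ)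
    (hid₁ : ∀ p i (φ : O p), 1 ≤ i → i ≤ p → comp p 1 p (by omega) i φ one = φ)
    (hid₂ : ∀ q (φ : O q), comp 1 q q (by omega) 1 one φ = φ)
    (hμ : comp 2 2 3 (by omega) 1 μ μ = comp 2 2 3 (by omega) 2 μ μ)
    (hμe₁ : comp 2 0 1 (by omega) 1 μ e = one)
    (hμe₂ : comp 2 0 1 (by omega) 2 μ e = one)
    -- (cyclic, unital) opposite module relations, with the extra operation `•₀` included
    (hrel₁ : ∀ p q n m1 m2 m i j
      (hq : q + m1 = n + 1) (hp : p + m = m1 + 1)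
      (hp2 : p + m2 = n + 1) (hq2 : q + m = m2 + 1)
      (φ : O p) (ψ : O q) (x : M n), j < i →
      bullet p m1 m hp i φ (bullet q n m1 hq j ψ x) =
        bullet q m2 m hq2 j ψ (bullet p n m2 hp2 (i + q - 1) φ x))
    (hrel₂ : ∀ p q n a m1 m i j
      (hq : q + m1 = n + 1) (hp : p + m = m1 + 1)
      (hpq : p + q = a + 1) (ha : a + m = n + 1)
      (φ : O p) (ψ : O q) (x : M n), j < i + p → i ≤ j →
      bullet p m1 m hp i φ (bullet q n m1 hq j ψ x) =
        bullet a n m ha i (comp p q a hpq (j - i + 1) φ ψ) x)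
    (hrel₃ : ∀ p q n m1 m2 m i j
      (hq : q + m1 = n + 1) (hp : p + m = m1 + 1)
      (hp2 : p + m2 = n + 1) (hq2 : q + m = m2 + 1)
      (φ : O p) (ψ : O q) (x : M n), i + p ≤ j →
      bullet p m1 m hp i φ (bullet q n m1 hq j ψ x) =
        bullet q m2 m hq2 (j - p + 1) ψ (bullet p n m2 hp2 i φ x))
    (hunital : ∀ n i (x : M n), i ≤ n → bullet 1 n n (by omega) i one x = x)
    (hcyc : ∀ p n m (h : p + m = n + 1) i (φ : O p) (x : M n), i + p ≤ n →
      t m (bullet p n m h i φ x) = bullet p n m h (i + 1) φ (t n x))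
    (htpow : ∀ n (x : M n), (t n)^[n + 1] x = x) :
    -- conclusion: `(M_•, d, s, t)` is a cyclic k-module
    -- simplicial identities:
    (∀ n i j (x : M (n + 2)), i < j → j ≤ n + 1 →
      dmap O M μ bullet t n i (dmap O M μ bullet t (n+1) j x) =
        dmap O M μ bullet t n (j-1) (dmap O M μ bullet t (n+1) i x)) ∧
    (∀ n i j (x : M n), i ≤ j → j ≤ n →
      smap O M e bullet (n+1) i (smap O M e bullet n j x) =
        smap O M e bullet (n+1) (j+1) (smap O M e bullet n i x)) ∧
    (∀ n i j (x : M (n + 1)), i < j → j ≤ n + 1 →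
      dmap O M μ bullet t (n+1) i (smap O M e bullet (n+1) j x) =
        smap O M e bullet n (j-1) (dmap O M μ bullet t n i x)) ∧
    (∀ n j (x : M n), j ≤ n →
      dmap O M μ bullet t n j (smap O M e bullet n j x) = x ∧
      dmap O M μ bullet t n (j+1) (smap O M e bullet n j x) = x) ∧
    (∀ n i j (x : M (n + 1)), j + 1 < i → i ≤ n + 2 → j ≤ n + 1 →
      dmap O M μ bullet t (n+1) i (smap O M e bullet (n+1) j x) =
        smap O M e bullet n j (dmap O M μ bullet t n (i-1) x)) ∧
    -- cyclic compatibilities: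
    (∀ n i (x : M (n + 1)), 1 ≤ i → i ≤ n + 1 →
      dmap O M μ bullet t n i (t (n+1) x) = t n (dmap O M μ bullet t n (i-1) x)) ∧
    (∀ n (x : M (n + 1)),
      dmap O M μ bullet t n 0 (t (n+1) x) = dmap O M μ bullet t n (n+1) x) ∧
    (∀ n i (x : M n), 1 ≤ i → i ≤ n →
      smap O M e bullet n i (t n x) = t (n+1) (smap O M e bullet n (i-1) x)) ∧
    (∀ n (x : M n),
      smap O M e bullet n 0 (t n x) = t (n+1) (t (n+1) (smap O M e bullet n n x))) ∧
    (∀ n (x : M n), (t n)^[n + 1] x = x) := by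
  -- iterated cyclicity
  have wrap_step : ∀ p n m (h : p + m = n + 1) (j : ℕ), j ≤ m → ∀ (φ : O p) (x : M n),
      (t m)^[j] (bullet p n m h 0 φ x) = bullet p n m h j φ ((t n)^[j] x) := by
    intro p n m h j
    induction j with
    | zero => intro _ φ x; simp
    | succ j ih =>
      intro hj φ x
      rw [Function.iterate_succ_apply', ih (by omega), hcyc p n m h j φ _ (by omega),
        Function.iterate_succ_apply']
  -- wrap-around lemma: t (φ •_m x) = φ •₀ (t^p x)
  have wrap : ∀ p n m (h : p + m = n + 1) (φ : O p) (x : M n),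
      t m (bullet p n m h m φ x) = bullet p n m h 0 φ ((t n)^[p] x) := by
    intro p n m h φ x
    have hx : (t n)^[m] ((t n)^[p] x) = x := by
      rw [← Function.iterate_add_apply]
      have hmp : m + p = n + 1 := by omega
      rw [hmp, htpow]
    have h1 : bullet p n m h m φ x = (t m)^[m] (bullet p n m h 0 φ ((t n)^[p] x)) := by
      rw [wrap_step p n m h m le_rfl, hx]
    rw [h1, ← Function.iterate_succ_apply' (t m) m, htpow]
  refine ⟨?_, ?_, ?_, ?_, ?_, ?_, ?_, ?_, ?_, htpow⟩
  · -- d_i d_j = d_{j-1} d_i,  i < j ≤ n+1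
    intro n i j x hij hj
    simp only [dmap]
    rw [if_neg (by omega), if_neg (by omega), if_neg (by omega), if_neg (by omega)]
    by_cases hji : j = i + 1
    · subst hji
      simp only [Nat.add_sub_cancel]
      rw [hrel₂ 2 2 (n + 2) 3 (n + 1) n i (i + 1) (by omega) (by omega) (by omega) (by omega)
          μ μ x (by omega) (by omega),
        hrel₂ 2 2 (n + 2) 3 (n + 1) n i i (by omega) (by omega) (by omega) (by omega)
          μ μ x (by omega) (by omega)]
      have h2 : i + 1 - i + 1 = 2 := by omega
      have h1 : i - i + 1 = 1 := by omega
      rw [h2, h1, hμ]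
    · rw [hrel₃ 2 2 (n + 2) (n + 1) (n + 1) n i j (by omega) (by omega) (by omega) (by omega)
          μ μ x (by omega)]
      have : j - 2 + 1 = j - 1 := by omega
      rw [this]
  · -- s_i s_j = s_{j+1} s_i,  i ≤ j ≤ n
    intro n i j x hij hj
    simp only [smap]
    rw [hrel₃ 0 0 n (n + 1) (n + 1) (n + 2) (i + 1) (j + 1) (by omega) (by omega) (by omega)
        (by omega) e e x (by omega)]
    have h2 : j + 1 - 0 + 1 = j + 1 + 1 := by omega
    rw [h2]
  · -- d_i s_j = s_{j-1} d_i,  i < j ≤ n+1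
    intro n i j x hij hj
    simp only [dmap, smap]
    rw [if_neg (by omega), if_neg (by omega)]
    rw [hrel₃ 2 0 (n + 1) (n + 2) n (n + 1) i (j + 1) (by omega) (by omega) (by omega)
        (by omega) μ e x (by omega)]
    have : j + 1 - 2 + 1 = j - 1 + 1 := by omega
    rw [this]
  · -- d_j s_j = id and d_{j+1} s_j = id
    intro n j x hj
    constructor
    · simp only [dmap, smap]
      rw [if_neg (by omega)]
      rw [hrel₂ 2 0 n 1 (n + 1) n j (j + 1) (by omega) (by omega) (by omega) (by omega)
          μ e x (by omega) (by omega)]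
      have : j + 1 - j + 1 = 2 := by omega
      rw [this, hμe₂, hunital n j x hj]
    · by_cases hjn : j = n
      · subst hjn
        simp only [dmap, smap]
        rw [if_pos True.intro]
        rw [wrap 0 j (j + 1) (by omega) e x]
        simp only [Function.iterate_zero, id_eq]
        rw [hrel₂ 2 0 j 1 (j + 1) j 0 0 (by omega) (by omega) (by omega) (by omega)
            μ e x (by omega) (by omega)]
        have : 0 - 0 + 1 = 1 := by omega
        rw [this, hμe₁, hunital j 0 x (by omega)]
      · simp only [dmap, smap]
        rw [if_neg (by omega)]
        rw [hrel₂ 2 0 n 1 (n + 1) n (j + 1) (j + 1) (by omega) (by omega) (by omega) (by omega)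
            μ e x (by omega) (by omega)]
        have : j + 1 - (j + 1) + 1 = 1 := by omega
        rw [this, hμe₁, hunital n (j + 1) x (by omega)]
  · -- d_i s_j = s_j d_{i-1},  j+1 < i
    intro n i j x hji hi hj
    by_cases hin : i = n + 2
    · subst hin
      simp only [dmap, smap]
      rw [if_pos True.intro, if_pos (show n + 2 - 1 = n + 1 by omega)]
      rw [hcyc 0 (n + 1) (n + 2) (by omega) (j + 1) e x (by omega)]
      rw [hrel₃ 2 0 (n + 1) (n + 2) n (n + 1) 0 (j + 2) (by omega) (by omega) (by omega)
          (by omega) μ e (t (n + 1) x) (by omega)]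
      have : j + 2 - 2 + 1 = j + 1 := by omega
      rw [this]
    · simp only [dmap, smap]
      rw [if_neg (by omega), if_neg (by omega)]
      rw [hrel₁ 2 0 (n + 1) (n + 2) n (n + 1) i (j + 1) (by omega) (by omega) (by omega)
          (by omega) μ e x (by omega)]
      have : i + 0 - 1 = i - 1 := by omega
      rw [this]
  · -- d_i ∘ t = t ∘ d_{i-1},  1 ≤ i ≤ n+1
    intro n i x h1 h2
    by_cases hin : i = n + 1
    · subst hin
      simp only [dmap]
      rw [if_pos True.intro, if_neg (show ¬ (n + 1 - 1 = n + 1) by omega)]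
      have h3 : n + 1 - 1 = n := by omega
      rw [h3, wrap 2 (n + 1) n (by omega) μ x]
      rfl
    · simp only [dmap]
      rw [if_neg (by omega), if_neg (by omega)]
      rw [hcyc 2 (n + 1) n (by omega) (i - 1) μ x (by omega)]
      have : i - 1 + 1 = i := by omega
      rw [this]
  · -- d_0 ∘ t = d_{n+1}
    intro n x
    simp only [dmap]
    rw [if_neg (by omega), if_pos True.intro]
  · -- s_i ∘ t = t ∘ s_{i-1},  1 ≤ i ≤ n
    intro n i x h1 h2
    simp only [smap]
    rw [hcyc 0 n (n + 1) (by omega) (i - 1 + 1) e x (by omega)]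
    have : i - 1 + 1 + 1 = i + 1 := by omega
    rw [this]
  · -- s_0 ∘ t = t² ∘ s_n
    intro n x
    simp only [smap]
    rw [wrap 0 n (n + 1) (by omega) e x]
    simp only [Function.iterate_zero, id_eq]
    rw [hcyc 0 n (n + 1) (by omega) 0 e x (by omega)]

end
end
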